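/- Assume q^{2d} ≠ 1 for all d ≥ 1. Then the subalgebra of invariant elements of the free algebra F = ℂ⟨A, B⟩ is not finitely generated as a ℂ-algebra: there is no finite subset S of F^{Inv} such that F^{Inv} equals the unital subalgebra generated by S. -/

import Mathlib

noncomputable section

/-- The free algebra `ℂ⟨A, B⟩` on the coefficients of the universal linear form. -/
abbrev FA : Type := FreeAlgebra ℂ (Fin 2)

/-- The coefficient `A` of the universal linear form `x·A + y·B`. -/
def cA : FA := FreeAlgebra.ι ℂ 0

/-- The coefficient `B` of the universal linear form `x·A + y·B`. -/
def cB : FA := FreeAlgebra.ι ℂ 1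

/-- The defining properties of the `U_q(gl(2,ℝ))`-action maps `E, F, K, K⁻¹` on the
coefficient algebra `ℂ⟨A, B⟩` of the universal linear form (with `s = q^{1/2}`). -/
def IsEFKKFree (q s : ℂ) (E F K Kinv : FA →ₗ[ℂ] FA) : Prop :=
  K 1 = 1 ∧ Kinv 1 = 1 ∧
  (∀ a b : FA, K (a * b) = K a * K b) ∧
  (∀ a b : FA, Kinv (a * b) = Kinv a * Kinv b) ∧
  (∀ a : FA, K (Kinv a) = a) ∧ (∀ a : FA, Kinv (K a) = a) ∧
  K cA = s • cA ∧ K cB = s⁻¹ • cB ∧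
  E 1 = 0 ∧ F 1 = 0 ∧
  E cA = 0 ∧ E cB = -((s ^ 3) • cA) ∧
  F cA = -((s ^ 3)⁻¹ • cB) ∧ F cB = 0 ∧
  (∀ a b : FA, E (a * b) = E a * K b + Kinv a * E b) ∧
  (∀ a b : FA, F (a * b) = F a * K b + Kinv a * F b)

namespace Stmt16Aux

open MonoidAlgebra FreeMonoid

abbrev M : Type := MonoidAlgebra ℂ (FreeMonoid (Fin 2))

/-- The canonical identification of the free algebra with the monoid algebra. -/
def T : FA ≃ₐ[ℂ] M := FreeAlgebra.equivMonoidAlgebraFreeMonoid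

lemma T_iota (x : Fin 2) :
    T (FreeAlgebra.ι ℂ x) = MonoidAlgebra.single (of x) (1 : ℂ) := by
  simp [T, FreeAlgebra.equivMonoidAlgebraFreeMonoid, MonoidAlgebra.of_apply]

/-- The weight (number of `0`s minus number of `1`s) of a word. -/
def wt (w : FreeMonoid (Fin 2)) : ℤ :=
  ((toList w).count 0 : ℤ) - ((toList w).count 1 : ℤ)

lemma wt_one : wt (1 : FreeMonoid (Fin 2)) = 0 := rfl

lemma wt_mul (v w : FreeMonoid (Fin 2)) : wt (v * w) = wt v + wt w := by
  simp only [wt, toList_mul, List.count_append]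
  push_cast
  ring

/-- The word `A^n B^n`. -/
def abw (n : ℕ) : FreeMonoid (Fin 2) :=
  ofList (List.replicate n 0 ++ List.replicate n 1)

lemma abw_zero : abw 0 = 1 := rfl

lemma toList_abw (n : ℕ) :
    toList (abw n) = List.replicate n 0 ++ List.replicate n 1 := rfl

lemma abw_succ (n : ℕ) : abw (n + 1) = of 0 * abw n * of 1 := by
  apply toList.injective
  show List.replicate (n+1) (0 : Fin 2) ++ List.replicate (n+1) (1 : Fin 2)
      = ([0] ++ (List.replicate n 0 ++ List.replicate n 1)) ++ [1]
  rw [List.replicate_succ (n := n) (a := (0 : Fin 2)),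
    List.replicate_succ' (n := n) (a := (1 : Fin 2))]
  simp [List.append_assoc]

lemma abw_ne_one (n : ℕ) (hn : 1 ≤ n) : abw n ≠ 1 := by
  intro h
  have := congrArg (fun w => (toList w).length) h
  simp [toList_abw, toList_one] at this
  omega

/-- The word corresponding to a list, as an element of the free algebra. -/
def lword : List (Fin 2) → FA
  | [] => 1
  | x :: l => FreeAlgebra.ι ℂ x * lword l

lemma T_lword (l : List (Fin 2)) :
    T (lword l) = MonoidAlgebra.single (ofList l) (1 : ℂ) := by
  induction l with
  | nil =>
    show T 1 = _
    rw [map_one, MonoidAlgebra.one_def]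
    rfl
  | cons x l ih =>
    show T (FreeAlgebra.ι ℂ x * lword l) = _
    rw [map_mul, ih, T_iota, MonoidAlgebra.single_mul_single, one_mul]
    rfl

section K

variable {q s : ℂ} {E F K Kinv : FA →ₗ[ℂ] FA}

lemma K_lword (hs0 : s ≠ 0) (hK1 : K 1 = 1)
    (hKm : ∀ a b : FA, K (a * b) = K a * K b)
    (hKA : K cA = s • cA) (hKB : K cB = s⁻¹ • cB) (l : List (Fin 2)) :
    K (lword l) = s ^ wt (ofList l) • lword l := by
  induction l with
  | nil =>
    show K 1 = s ^ wt (1 : FreeMonoid (Fin 2)) • (1 : FA)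
    rw [hK1, wt_one, zpow_zero, one_smul]
  | cons x l ih =>
    have hx : K (FreeAlgebra.ι ℂ x)
        = s ^ (if x = 0 then (1 : ℤ) else -1) • FreeAlgebra.ι ℂ x := by
      fin_cases x
      · simpa [cA] using hKA
      · simpa [cB, zpow_neg_one] using hKB
    have hwt : wt (ofList (x :: l)) = (if x = 0 then (1:ℤ) else -1) + wt (ofList l) := by
      fin_cases x <;>
        simp [wt, toList_ofList, List.count_cons] <;> push_cast <;> ring
    show K (FreeAlgebra.ι ℂ x * lword l) = _
    rw [hKm, hx, ih, hwt, zpow_add₀ hs0, smul_mul_assoc, mul_smul_comm, smul_smul]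
    rfl

lemma T_K_apply (hs0 : s ≠ 0) (hK1 : K 1 = 1)
    (hKm : ∀ a b : FA, K (a * b) = K a * K b)
    (hKA : K cA = s • cA) (hKB : K cB = s⁻¹ • cB) (a : FA) (w : FreeMonoid (Fin 2)) :
    (T (K a)).coeff w = s ^ wt w * (T a).coeff w := by
  have key : ∀ c : M, (T (K (T.symm c))).coeff w = s ^ wt w * c.coeff w := by
    intro c
    induction c using MonoidAlgebra.induction_linear with
    | zero => simp
    | add f g hf hg =>
      rw [map_add, map_add, map_add, MonoidAlgebra.coeff_add, MonoidAlgebra.coeff_add,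
        Finsupp.add_apply, Finsupp.add_apply, hf, hg]
      ring
    | single v r =>
      have h1 : T.symm (MonoidAlgebra.single v r) = r • lword (toList v) := by
        apply T.injective
        rw [AlgEquiv.apply_symm_apply, map_smul, T_lword, ofList_toList,
          MonoidAlgebra.smul_single', mul_one]
      rw [h1, map_smul, K_lword hs0 hK1 hKm hKA hKB, map_smul, map_smul, T_lword,
        ofList_toList]
      rw [MonoidAlgebra.smul_single', MonoidAlgebra.smul_single', mul_one]
      rcases eq_or_ne v w with h | h
      · subst h
        rw [MonoidAlgebra.coeff_single, MonoidAlgebra.coeff_single, Finsupp.single_eq_same,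
          Finsupp.single_eq_same]
        ring
      · rw [MonoidAlgebra.coeff_single, MonoidAlgebra.coeff_single, Finsupp.single_eq_of_ne' h,
          Finsupp.single_eq_of_ne' h, mul_zero]
  have h := key (T a)
  rwa [AlgEquiv.symm_apply_apply] at h

lemma balanced_of_K (hs0 : s ≠ 0) (hzero : ∀ m : ℤ, s ^ m = 1 → m = 0)
    (hK1 : K 1 = 1) (hKm : ∀ a b : FA, K (a * b) = K a * K b)
    (hKA : K cA = s • cA) (hKB : K cB = s⁻¹ • cB)
    {a : FA} (ha : K a = a) : ∀ w ∈ (T a).coeff.support, wt w = 0 := by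
  intro w hw
  have h := T_K_apply hs0 hK1 hKm hKA hKB a w
  rw [ha] at h
  have hne : (T a).coeff w ≠ 0 := Finsupp.mem_support_iff.mp hw
  have h1 : s ^ wt w * (T a).coeff w = 1 * (T a).coeff w := by rw [one_mul, ← h]
  exact hzero _ (mul_right_cancel₀ hne h1)

end K

lemma s_zpow_eq_one {q s : ℂ} (hs : s ^ 2 = q) (hs0 : s ≠ 0)
    (hroot : ∀ d : ℕ, 1 ≤ d → q ^ (2 * d) ≠ 1) :
    ∀ m : ℤ, s ^ m = 1 → m = 0 := by
  intro m hm
  by_contra hm0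
  set d := m.natAbs with hd
  have hd1 : 1 ≤ d := by omega
  have hsd : s ^ d = 1 := by
    rcases le_or_gt 0 m with h | h
    · have : ((d : ℤ)) = m := Int.natAbs_of_nonneg h
      rw [← zpow_natCast, this, hm]
    · have : ((d : ℤ)) = -m := by omega
      rw [← zpow_natCast, this, zpow_neg, hm, inv_one]
  have : q ^ (2 * d) = 1 := by
    rw [← hs, ← pow_mul, show 2 * (2 * d) = d * 4 by ring, pow_mul, hsd, one_pow]
  exact hroot d hd1 this

lemma split_abw (n : ℕ) {v w : FreeMonoid (Fin 2)} (h : v * w = abw n)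
    (hv : wt v = 0) : v = 1 ∨ w = 1 := by
  have hl : toList v ++ toList w
      = List.replicate n (0 : Fin 2) ++ List.replicate n 1 := by
    rw [← toList_mul, h, toList_abw]
  set k := (toList v).length with hk
  have hv1 : toList v = (List.replicate n (0 : Fin 2) ++ List.replicate n 1).take k := by
    rw [← hl, List.take_left]
  rw [List.take_append, List.take_replicate, List.take_replicate,
    List.length_replicate] at hv1
  have hc0 : (toList v).count 0 = min k n := by
    rw [hv1]; simp [List.count_append, List.count_replicate]
  have hc1 : (toList v).count 1 = min (k - n) n := by
    rw [hv1]; simp [List.count_append, List.count_replicate]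
  have hk2 : k + (toList w).length = 2 * n := by
    have := congrArg List.length hl
    simp only [List.length_append, List.length_replicate] at this
    omega
  have hv' : ((min k n : ℕ) : ℤ) - ((min (k - n) n : ℕ) : ℤ) = 0 := by
    rw [← hc0, ← hc1]; exact hv
  have hcase : k = 0 ∨ k = 2 * n := by omega
  rcases hcase with h0 | h2
  · left
    apply toList.injective
    rw [toList_one, ← List.length_eq_zero_iff, ← hk]
    exact h0
  · right
    apply toList.injective
    rw [toList_one, ← List.length_eq_zero_iff]
    omega

lemma coeff_mul_abw_eq_zero (n : ℕ) {x y : M}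
    (hx : ∀ w ∈ x.coeff.support, wt w = 0)
    (hx0 : x.coeff (abw n) = 0) (hy0 : y.coeff (abw n) = 0) : (x * y).coeff (abw n) = 0 := by
  classical
  rw [MonoidAlgebra.coeff_mul]
  simp only [Finsupp.sum]
  refine Finset.sum_eq_zero fun a ha => Finset.sum_eq_zero fun b hb => ?_
  split_ifs with hab
  · rcases split_abw n hab (hx a ha) with h | h
    · subst h
      rw [one_mul] at hab
      subst hab
      rw [hy0, mul_zero]
    · subst h
      rw [mul_one] at hab
      subst hab
      rw [hx0, zero_mul]
  · rfl

/-- The sequence of nested invariants `a₀ = 1`, `a_{n+1} = A aₙ B − q⁻¹ B aₙ A`. -/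
def aSeq (s : ℂ) : ℕ → FA
  | 0 => 1
  | n + 1 => cA * aSeq s n * cB - (s ^ 2)⁻¹ • (cB * aSeq s n * cA)

lemma coeff_aSeq (s : ℂ) (n : ℕ) : (T (aSeq s n)).coeff (abw n) = 1 := by
  induction n with
  | zero =>
    show (T 1).coeff (abw 0) = 1
    rw [map_one, abw_zero, MonoidAlgebra.one_def]
    simp
  | succ n ih =>
    show (T (cA * aSeq s n * cB - (s ^ 2)⁻¹ • (cB * aSeq s n * cA))).coeff (abw (n+1)) = 1
    rw [map_sub, map_smul, MonoidAlgebra.coeff_sub, MonoidAlgebra.coeff_smul, Finsupp.sub_apply,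
      Finsupp.smul_apply]
    have hterm2 : (T (cB * aSeq s n * cA)).coeff (abw (n+1)) = 0 := by
      rw [map_mul, map_mul, mul_assoc]
      unfold cB
      rw [T_iota]
      apply MonoidAlgebra.single_mul_apply_of_not_exists_mul
      rintro ⟨d, hd⟩
      have := congrArg toList hd
      rw [toList_abw, toList_mul, toList_of, List.replicate_succ] at this
      simp only [List.cons_append, List.singleton_append] at this
      injection this with h1 _
      exact absurd h1 (by decide)
    have hterm1 : (T (cA * aSeq s n * cB)).coeff (abw (n+1)) = 1 := by
      rw [map_mul, map_mul]
      unfold cA cB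
      rw [T_iota, T_iota]
      have H2 : ∀ a : FreeMonoid (Fin 2),
          a * of 1 = abw (n+1) ↔ a = of 0 * abw n := by
        intro a
        rw [abw_succ]
        exact mul_left_inj (of 1)
      rw [MonoidAlgebra.coeff_mul_single_eq_coeff_mul _ (fun a _ => H2 a)]
      have H1 : ∀ a : FreeMonoid (Fin 2),
          of 0 * a = of 0 * abw n ↔ a = abw n := fun a => mul_right_inj (of 0)
      rw [MonoidAlgebra.coeff_single_mul_eq_mul_coeff _ (fun a _ => H1 a), ih, one_mul, mul_one]
    rw [hterm1, hterm2, smul_eq_mul, mul_zero, sub_zero]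

section Inv

variable {q s : ℂ} {E F K Kinv : FA →ₗ[ℂ] FA}

lemma aSeq_invariant (hs0 : s ≠ 0) (h : IsEFKKFree q s E F K Kinv) (n : ℕ) :
    E (aSeq s n) = 0 ∧ F (aSeq s n) = 0 ∧ K (aSeq s n) = aSeq s n ∧
      Kinv (aSeq s n) = aSeq s n := by
  obtain ⟨hK1, hKi1, hKm, hKim, hKKi, hKiK, hKA, hKB, hE1, hF1, hEA, hEB, hFA, hFB,
    hEm, hFm⟩ := h
  have hKiA : Kinv cA = s⁻¹ • cA := by
    have : Kinv (K (s⁻¹ • cA)) = s⁻¹ • cA := hKiK _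
    rwa [map_smul, hKA, smul_smul, inv_mul_cancel₀ hs0, one_smul] at this
  have hKiB : Kinv cB = s • cB := by
    have : Kinv (K (s • cB)) = s • cB := hKiK _
    rwa [map_smul, hKB, smul_smul, mul_inv_cancel₀ hs0, one_smul] at this
  induction n with
  | zero => exact ⟨hE1, hF1, hK1, hKi1⟩
  | succ n ih =>
    obtain ⟨hEu, hFu, hKu, hKiu⟩ := ih
    set u := aSeq s n with hu
    have hshow : aSeq s (n+1) = cA * u * cB - (s ^ 2)⁻¹ • (cB * u * cA) := rfl
    have hs2 : (s : ℂ) ^ 2 ≠ 0 := pow_ne_zero _ hs0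
    constructor
    · rw [hshow, map_sub, map_smul]
      simp only [hEm, hEA, hEB, hEu, hKu, hKiu, hKim, hKiA, hKiB, hKB, hKA]
      simp only [zero_mul, mul_zero, add_zero, zero_add, smul_mul_assoc,
        mul_smul_comm, smul_smul, mul_neg, neg_mul, smul_neg, mul_one, one_mul]
      match_scalars <;> (try field_simp) <;> try ring
    constructor
    · rw [hshow, map_sub, map_smul]
      simp only [hFm, hFA, hFB, hFu, hKu, hKiu, hKim, hKiA, hKiB, hKB, hKA]
      simp only [zero_mul, mul_zero, add_zero, zero_add, smul_mul_assoc,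
        mul_smul_comm, smul_smul, mul_neg, neg_mul, smul_neg, mul_one, one_mul]
      match_scalars <;> (try field_simp) <;> try ring
    constructor
    · rw [hshow, map_sub, map_smul]
      simp only [hKm, hKA, hKB, hKu]
      simp only [smul_mul_assoc, mul_smul_comm, smul_smul]
      match_scalars <;> (try field_simp) <;> try ring
    · rw [hshow, map_sub, map_smul]
      simp only [hKim, hKiA, hKiB, hKiu]
      simp only [smul_mul_assoc, mul_smul_comm, smul_smul]
      match_scalars <;> (try field_simp) <;> try ring

end Inv

end Stmt16Aux

open Stmt16Aux FreeMonoid MonoidAlgebra in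
/-- **Proposition 6.1.** If `q` is not a root of unity, the algebra of
universal invariants of the universal linear form is not finitely generated. -/
theorem stmt16 (q s : ℂ) (hq : ‖q‖ = 1) (hq1 : q ≠ 1) (hq2 : q ≠ -1)
    (hq3 : q ≠ Complex.I) (hq4 : q ≠ -Complex.I) (hs : s ^ 2 = q)
    (hroot : ∀ d : ℕ, 1 ≤ d → q ^ (2 * d) ≠ 1)
    (E F K Kinv : FA →ₗ[ℂ] FA) (hEFKK : IsEFKKFree q s E F K Kinv) :
    ¬ ∃ S : Finset FA, (↑S : Set FA) ⊆ {a : FA | E a = 0 ∧ F a = 0 ∧ K a = a} ∧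
      {a : FA | E a = 0 ∧ F a = 0 ∧ K a = a} =
        (Algebra.adjoin ℂ (↑S : Set FA) : Set FA) := by
  classical
  have hq0 : q ≠ 0 := by
    intro h; rw [h] at hq; simp at hq
  have hs0 : s ≠ 0 := by
    intro h; apply hq0; rw [← hs, h]; ring
  have hzero : ∀ m : ℤ, s ^ m = 1 → m = 0 := s_zpow_eq_one hs hs0 hroot
  obtain ⟨hK1, hKi1, hKm, hKim, hKKi, hKiK, hKA, hKB, hE1, hF1, hEA, hEB, hFA, hFB,
    hEm, hFm⟩ := hEFKK
  rintro ⟨S, hS, hset⟩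
  set N := S.sup (fun x => (T x).coeff.support.sup (fun w => (toList w).length)) with hN
  set n := N + 1 with hn
  -- the invariant aSeq s n lies in the adjoined algebra
  have hinv := aSeq_invariant (q := q) hs0
    ⟨hK1, hKi1, hKm, hKim, hKKi, hKiK, hKA, hKB, hE1, hF1, hEA, hEB, hFA, hFB, hEm, hFm⟩ n
  have hmem : aSeq s n ∈ Algebra.adjoin ℂ (↑S : Set FA) := by
    have h1 : aSeq s n ∈ {a : FA | E a = 0 ∧ F a = 0 ∧ K a = a} :=
      ⟨hinv.1, hinv.2.1, hinv.2.2.1⟩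
    rw [hset] at h1
    exact h1
  have hspan : aSeq s n ∈ Submodule.span ℂ
      ((Submonoid.closure (↑S : Set FA) : Submonoid FA) : Set FA) := by
    rw [← Algebra.adjoin_eq_span]
    exact hmem
  -- the key property P
  have habw_len : (toList (abw n)).length = 2 * n := by
    simp [toList_abw, List.length_append]; ring
  have hPc : ∀ x ∈ Submonoid.closure (↑S : Set FA),
      (∀ w ∈ (T x).coeff.support, wt w = 0) ∧ (T x).coeff (abw n) = 0 := by
    intro x hx
    induction hx using Submonoid.closure_induction with
    | mem x hxS =>
      obtain ⟨hEx, hFx, hKx⟩ := hS hxS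
      refine ⟨balanced_of_K hs0 hzero hK1 hKm hKA hKB hKx, ?_⟩
      by_contra hcoef
      have hsup : abw n ∈ (T x).coeff.support := Finsupp.mem_support_iff.mpr hcoef
      have h1 : (toList (abw n)).length ≤ (T x).coeff.support.sup (fun w => (toList w).length) :=
        Finset.le_sup hsup
      have h2 : (T x).coeff.support.sup (fun w => (toList w).length) ≤ N := by
        rw [hN]
        exact Finset.le_sup (f := fun x => (T x).coeff.support.sup (fun w => (toList w).length))
          (Finset.mem_coe.mp hxS)
      omega
    | one =>
      constructor
      · intro w hw
        rw [map_one, MonoidAlgebra.one_def, MonoidAlgebra.coeff_single] at hw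
        have := Finsupp.support_single_subset hw
        simp only [Finset.mem_singleton] at this
        rw [this, wt_one]
      · rw [map_one, MonoidAlgebra.one_def, MonoidAlgebra.coeff_single,
          Finsupp.single_eq_of_ne' (Ne.symm (abw_ne_one n (by omega)))]
    | mul x y hxc hyc ihx ihy =>
      rw [map_mul]
      constructor
      · intro w hw
        have := MonoidAlgebra.support_coeff_mul_subset (T x) (T y) hw
        rw [Finset.mem_mul] at this
        obtain ⟨a, ha, b, hb, hab⟩ := this
        rw [← hab, wt_mul, ihx.1 a ha, ihy.1 b hb, add_zero]
      · exact coeff_mul_abw_eq_zero n ihx.1 ihx.2 ihy.2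
  have hPs : ∀ x, x ∈ Submodule.span ℂ
      ((Submonoid.closure (↑S : Set FA) : Submonoid FA) : Set FA) →
      (∀ w ∈ (T x).coeff.support, wt w = 0) ∧ (T x).coeff (abw n) = 0 := by
    intro x hx
    induction hx using Submodule.span_induction with
    | mem x hxc => exact hPc x hxc
    | zero => simp
    | add x y hx hy ihx ihy =>
      rw [map_add, MonoidAlgebra.coeff_add]
      constructor
      · intro w hw
        rcases Finset.mem_union.mp (Finsupp.support_add hw) with h | h
        · exact ihx.1 w h
        · exact ihy.1 w h
      · rw [Finsupp.add_apply, ihx.2, ihy.2, add_zero]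
    | smul c x hx ih =>
      rw [map_smul, MonoidAlgebra.coeff_smul]
      constructor
      · intro w hw
        exact ih.1 w (Finsupp.support_smul hw)
      · rw [Finsupp.smul_apply, ih.2, smul_zero]
  have hP := hPs _ hspan
  have := coeff_aSeq s n
  rw [hP.2] at this
  exact zero_ne_one this
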